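/- For every s > 0, every n ∈ ℕ and every k with 1 ≤ k ≤ n, one has (Γ(2s + n − k)/Γ(2s)) · (Γ(2s + k)/Γ(2s)) · ∫₀¹ u^{k−1}(1−u)^{2s−1} du = (Γ(2s + n)/Γ(2s)) · ∫₀¹ u^{k−1}(1−u)^{n−k+2s−1} du. In other words, the moment sequence R_n = Γ(2s+n)/Γ(2s) of the Gamma distribution with shape 2s, together with the redistribution measure M(du) = u^{−1}(1−u)^{2s−1} du, satisfies the moment relation R_{n−k} R_k ∫ u^k M(du) = R_n ∫ u^k(1−u)^{n−k} M(du). -/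
import Mathlib


open MeasureTheory Real Set

lemma real_beta_integral (a b : ℝ) (ha : 0 < a) (hb : 0 < b) :
    ∫ u in Set.Ioo (0:ℝ) 1, u ^ (a - 1) * (1 - u) ^ (b - 1)
      = Real.Gamma a * Real.Gamma b / Real.Gamma (a + b) := by
  have key := Complex.Gamma_mul_Gamma_eq_betaIntegral (s := (a : ℂ)) (t := (b : ℂ))
    (by simpa using ha) (by simpa using hb)
  have hbeta : Complex.betaIntegral (a : ℂ) (b : ℂ)
      = ((∫ u in Set.Ioo (0:ℝ) 1, u ^ (a - 1) * (1 - u) ^ (b - 1) : ℝ) : ℂ) := by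
    rw [Complex.betaIntegral]
    rw [intervalIntegral.integral_of_le zero_le_one,
      MeasureTheory.integral_Ioc_eq_integral_Ioo]
    have step : (∫ t in Set.Ioo (0:ℝ) 1, (t:ℂ) ^ ((a:ℂ) - 1) * (1 - (t:ℂ)) ^ ((b:ℂ) - 1))
        = ∫ t in Set.Ioo (0:ℝ) 1, ((t ^ (a - 1) * (1 - t) ^ (b - 1) : ℝ) : ℂ) := by
      refine MeasureTheory.setIntegral_congr_fun measurableSet_Ioo fun x hx => ?_
      obtain ⟨hx0, hx1⟩ := hx
      rw [Complex.ofReal_mul, Complex.ofReal_cpow hx0.le, Complex.ofReal_cpow (by linarith)]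
      push_cast
      ring_nf
    rw [step]; exact integral_ofReal
  rw [hbeta] at key
  have hab : Real.Gamma (a + b) ≠ 0 := (Real.Gamma_pos_of_pos (by linarith)).ne'
  rw [show ((a:ℂ) + b) = ((a + b : ℝ) : ℂ) by push_cast; ring, Complex.Gamma_ofReal,
    Complex.Gamma_ofReal, Complex.Gamma_ofReal, ← Complex.ofReal_mul, ← Complex.ofReal_mul] at key
  have h := Complex.ofReal_inj.mp key
  field_simp
  linarith [h]

/-- The moment sequence `R_n = Γ(2s+n)/Γ(2s)` of the Gamma distribution with shape `2s`,
together with the redistribution measure `M(du) = u^{−1}(1−u)^{2s−1} du`, satisfies the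
moment relation `R_{n−k} R_k ∫ u^k M(du) = R_n ∫ u^k (1−u)^{n−k} M(du)`. -/
theorem gamma_moment_relation (s : ℝ) (hs : 0 < s) (n k : ℕ) (hk1 : 1 ≤ k) (hkn : k ≤ n) :
    (Real.Gamma (2 * s + (n - k : ℕ)) / Real.Gamma (2 * s)) *
      (Real.Gamma (2 * s + k) / Real.Gamma (2 * s)) *
        (∫ u in Set.Ioo (0:ℝ) 1, u ^ (k - 1) * (1 - u) ^ (2 * s - 1))
    = (Real.Gamma (2 * s + n) / Real.Gamma (2 * s)) *
        ∫ u in Set.Ioo (0:ℝ) 1, u ^ (k - 1) * (1 - u) ^ ((n : ℝ) - k + 2 * s - 1) := by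
  have hcast : ((k - 1 : ℕ) : ℝ) = (k : ℝ) - 1 := by
    push_cast [Nat.cast_sub hk1]; ring
  have hpow : ∀ c : ℝ, (∫ u in Set.Ioo (0:ℝ) 1, u ^ (k - 1) * (1 - u) ^ c)
      = ∫ u in Set.Ioo (0:ℝ) 1, u ^ ((k : ℝ) - 1) * (1 - u) ^ c := by
    intro c
    refine MeasureTheory.setIntegral_congr_fun measurableSet_Ioo fun x hx => ?_
    rw [← Real.rpow_natCast x (k - 1), hcast]
  have hk0 : (0:ℝ) < k := by exact_mod_cast hk1
  have h2s : (0:ℝ) < 2 * s := by linarith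
  have hnk : (0:ℝ) < (n : ℝ) - k + 2 * s := by
    have : (k:ℝ) ≤ n := by exact_mod_cast hkn
    linarith
  rw [hpow, hpow, real_beta_integral k (2*s) hk0 h2s,
    real_beta_integral k ((n:ℝ) - k + 2*s) hk0 hnk]
  have hnkcast : ((n - k : ℕ) : ℝ) = (n : ℝ) - k := by
    push_cast [Nat.cast_sub hkn]; ring
  rw [hnkcast]
  have e1 : Real.Gamma (2 * s + k) = Real.Gamma ((k:ℝ) + 2 * s) := by ring_nf
  have e2 : Real.Gamma (2 * s + ((n:ℝ) - k)) = Real.Gamma ((n:ℝ) - k + 2 * s) := by ring_nf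
  have e3 : Real.Gamma ((k:ℝ) + ((n:ℝ) - k + 2 * s)) = Real.Gamma (2 * s + n) := by ring_nf
  rw [e1, e2, e3]
  have g1 : Real.Gamma (2 * s) ≠ 0 := (Real.Gamma_pos_of_pos h2s).ne'
  have g2 : Real.Gamma ((k:ℝ) + 2 * s) ≠ 0 := (Real.Gamma_pos_of_pos (by linarith)).ne'
  have g3 : Real.Gamma (2 * s + n) ≠ 0 :=
    (Real.Gamma_pos_of_pos (by positivity)).ne'
  field_simp
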